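/- Let $A_1, \ldots, A_M \in \mathbb{R}^{N\times N}$ admit decompositions $A_i = P_i J_i P_i^{-1}$ with $\|J_i\| < 1$ for all $i$, and let $\mathcal{G}$ be a switching digraph with weights $\omega^+_{ij} = \ln\|P_j^{-1}P_i\|$ and $\omega^-_{ij} = -\ln\|J_i\| > 0$. If $\tau > \nu(\mathcal{G})$, the maximum cycle ratio, then every solution of the switched system $x(t+1) = A_{\sigma(t)}x(t)$ with switching signal respecting $\mathcal{G}$ and dwell times $t_k - t_{k-1} \ge \tau$ converges to zero. -/

import Mathlib

/-!
Write `ω i j = ω⁺ᵢⱼ - τ ω⁻ᵢ`. Since `τ > ν(𝒢)`, every cycle `C` of the switching graph has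
`ω(C) ≤ -ε |C|` for some `ε > 0`. Cutting simple cycles out of the walk `s₁ s₂ …` of active modes
until a simple path (of bounded weight) is left shows that the weight of its first `k` edges is
at most `const - ε k`.

In the coordinates `zₖ = P_{sₖ₊₁}⁻¹ x(tₖ)` of the mode active on `[tₖ, tₖ₊₁)` one dwell interval
acts as `zₖ₊₁ = (P_{sₖ₊₂}⁻¹ P_{sₖ₊₁}) J_{sₖ₊₁}^{tₖ₊₁ - tₖ} zₖ`, whose norm is at most
`exp (ω sₖ₊₁ sₖ₊₂) ‖zₖ‖` because the interval is at least `τ` long and `‖J‖ < 1`. Hence `zₖ → 0`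
exponentially, and inside an interval the state is bounded by `maxᵢ ‖Pᵢ‖ · ‖zₖ‖`. The argument is
run on the complexified transition matrices in the ring of complex matrices with the spectral
norm.
-/

open scoped Matrix.Norms.L2Operator

/-- A cycle, represented by the list of its distinct vertices; every consecutive pair,
including the wrap-around pair, is a directed edge. -/
def IsCycleList {V : Type*} (E : V → V → Prop) (c : List V) : Prop :=
  c ≠ [] ∧ c.Nodup ∧ ∀ p ∈ c.zip (c.rotate 1), E p.1 p.2

/-- The weight of a cycle: the sum of its edge weights, including the wrap-around edge. -/
def cycleWeight {V : Type*} (ω : V → V → ℝ) (c : List V) : ℝ :=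
  ((c.zip (c.rotate 1)).map fun p => ω p.1 p.2).sum

open Filter Topology Real List
open scoped Matrix

section Walks

variable {V : Type*} {E : V → V → Prop} (w : V → V → ℝ)

def walkWeight (l : List V) : ℝ :=
  (l.consecutivePairs.map fun p => w p.1 p.2).sum

@[simp] lemma walkWeight_nil : walkWeight w [] = 0 := rfl

@[simp] lemma walkWeight_singleton (a : V) : walkWeight w [a] = 0 := rfl

@[simp] lemma walkWeight_cons_cons (a b : V) (l : List V) :
    walkWeight w (a :: b :: l) = w a b + walkWeight w (b :: l) := by
  simp [walkWeight, consecutivePairs]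

lemma walkWeight_split (l₁ : List V) (c : V) (l₂ : List V) :
    walkWeight w (l₁ ++ c :: l₂) = walkWeight w (l₁ ++ [c]) + walkWeight w (c :: l₂) := by
  induction l₁ with
  | nil => simp
  | cons a l ih => cases l <;> simp_all [add_assoc]

lemma walkWeight_le_length_mul {W : ℝ} (hW : ∀ i j, w i j ≤ W) (hW₀ : 0 ≤ W) (l : List V) :
    walkWeight w l ≤ l.length * W := by
  induction l with
  | nil => simp
  | cons a l ih =>
    cases l with
    | nil => simp [hW₀]
    | cons b l =>
      simp only [walkWeight_cons_cons, length_cons, Nat.cast_succ] at ih ⊢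
      linarith [hW a b]

lemma walkWeight_map_range (f : ℕ → V) (n : ℕ) :
    walkWeight w ((range (n + 1)).map f) = ∑ k ∈ Finset.range n, w (f k) (f (k + 1)) := by
  induction n with
  | zero => simp
  | succ n ih =>
    rw [range_succ, map_append, map_singleton, range_succ, map_append, map_singleton, append_assoc,
      singleton_append, walkWeight_split, ← map_singleton, ← map_append, ← range_succ, ih,
      Finset.sum_range_succ]
    simp

lemma cycleWeight_cons (v : V) (l : List V) :
    cycleWeight w (v :: l) = walkWeight w (v :: l ++ [v]) := by
  have hzip : (v :: l ++ [v]).zip (l ++ [v] ++ []) = (v :: l).zip (l ++ [v]) ++ [v].zip [] :=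
    zip_append (by simp)
  simp_all [cycleWeight, walkWeight, consecutivePairs, rotate_cons_succ]

lemma isCycleList_cons_iff (v : V) (l : List V) :
    IsCycleList E (v :: l) ↔ (v :: l).Nodup ∧ (v :: l ++ [v]).IsChain E := by
  rw [isChain_cons_append_singleton_iff_forall₂, forall₂_iff_zip]
  simp [IsCycleList, rotate_cons_succ]

lemma exists_eq_append_cons_append_cons_of_not_nodup {l : List V} (h : ¬ l.Nodup) :
    ∃ l₁ v l₂ l₃, l = l₁ ++ v :: (l₂ ++ v :: l₃) ∧ (v :: l₂).Nodup := by
  induction l with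
  | nil => simp at h
  | cons a l ih =>
    by_cases hl : l.Nodup
    · have ha : a ∈ l := by_contra fun ha => h (nodup_cons.2 ⟨ha, hl⟩)
      obtain ⟨l₂, l₃, rfl⟩ := append_of_mem ha
      exact ⟨[], a, l₂, l₃, rfl,
        (perm_middle.nodup_iff.1 hl).sublist ((sublist_append_left _ _).cons_cons a)⟩
    · obtain ⟨l₁, v, l₂, l₃, rfl, hv⟩ := ih hl
      exact ⟨a :: l₁, v, l₂, l₃, rfl, hv⟩

lemma walkWeight_le_of_forall_cycleWeight_le [Fintype V] {W ε : ℝ} (hW : ∀ i j, w i j ≤ W)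
    (hW₀ : 0 ≤ W) (hε : 0 ≤ ε)
    (hcyc : ∀ c, IsCycleList E c → cycleWeight w c ≤ -(ε * c.length)) (l : List V)
    (hl : l.IsChain E) :
    walkWeight w l ≤ Fintype.card V * (W + ε) - ε * l.length := by
  by_cases hnd : l.Nodup
  · have hlen : (l.length : ℝ) ≤ Fintype.card V := by exact_mod_cast hnd.length_le_card
    nlinarith [walkWeight_le_length_mul w hW hW₀ l]
  · obtain ⟨l₁, v, l₂, l₃, rfl, hv⟩ := exists_eq_append_cons_append_cons_of_not_nodup hnd
    obtain ⟨hl₁, hl₂⟩ := isChain_split.1 hl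
    obtain ⟨hcycle, hl₃⟩ := (isChain_split (l₁ := v :: l₂)).1 hl₂
    have hrest := walkWeight_le_of_forall_cycleWeight_le hW hW₀ hε hcyc (l₁ ++ v :: l₃)
      (isChain_split.2 ⟨hl₁, hl₃⟩)
    have hcycle := hcyc _ ((isCycleList_cons_iff v l₂).2 ⟨hv, hcycle⟩)
    have hsplit : walkWeight w (l₁ ++ v :: (l₂ ++ v :: l₃)) =
        walkWeight w (l₁ ++ v :: l₃) + cycleWeight w (v :: l₂) := by
      rw [cycleWeight_cons, walkWeight_split w l₁ v, walkWeight_split w l₁ v l₃, ← cons_append,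
        walkWeight_split w (v :: l₂) v]
      ring
    rw [hsplit]
    simp only [length_append, length_cons] at hrest hcycle ⊢
    push_cast at hrest hcycle ⊢
    linarith
termination_by l.length
decreasing_by simp_all

theorem tendsto_sum_atBot_of_forall_cycleWeight_le [Finite V] {w : V → V → ℝ} {ε : ℝ}
    (hε : 0 < ε) (hcyc : ∀ c, IsCycleList E c → cycleWeight w c ≤ -(ε * c.length)) {f : ℕ → V}
    (hf : ∀ k, E (f k) (f (k + 1))) :
    Tendsto (fun n => ∑ k ∈ Finset.range n, w (f k) (f (k + 1))) atTop atBot := by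
  have := Fintype.ofFinite V
  obtain ⟨W, hW⟩ := (Set.finite_range (Function.uncurry w)).bddAbove
  have hwW : ∀ i j, w i j ≤ max W 0 := fun i j => (hW ⟨(i, j), rfl⟩).trans (le_max_left _ _)
  refine tendsto_atBot_mono (fun n => ?_) <| tendsto_atBot_add_const_left _
    (Fintype.card V * (max W 0 + ε)) <|
    tendsto_neg_atTop_atBot.comp (tendsto_natCast_atTop_atTop.const_mul_atTop hε)
  have hchain : ((range (n + 1)).map f).IsChain E := by
    rw [isChain_map, isChain_range_succ]
    exact fun k _ => hf k
  have := walkWeight_le_of_forall_cycleWeight_le w hwW (le_max_right _ _) hε.le hcyc _ hchain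
  rw [walkWeight_map_range, length_map, length_range] at this
  simp only [Function.comp_apply, Nat.cast_add, Nat.cast_one] at this ⊢
  linarith

end Walks

section CycleRatio

variable {V : Type*}

lemma length_mul_le_cycleWeight {ω : V → V → ℝ} {m : ℝ} (h : ∀ i j, m ≤ ω i j) (c : List V) :
    c.length * m ≤ cycleWeight ω c := by
  have := card_nsmul_le_sum ((c.zip (c.rotate 1)).map fun p => ω p.1 p.2) m
    (by simp only [List.mem_map]; rintro _ ⟨p, -, rfl⟩; exact h _ _)
  simpa [cycleWeight] using this

lemma cycleWeight_sub_mul (a b : V → V → ℝ) (τ : ℝ) (c : List V) :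
    cycleWeight (fun i j => a i j - τ * b i j) c = cycleWeight a c - τ * cycleWeight b c := by
  unfold cycleWeight
  induction c.zip (c.rotate 1) <;> simp [*]
  ring

lemma cycleWeight_sub_mul_le_of_div_le {a b : V → V → ℝ} {ν τ m : ℝ} (hm : 0 < m)
    (hb : ∀ i j, m ≤ b i j) (hντ : ν ≤ τ) {c : List V} (hc : c ≠ [])
    (hν : cycleWeight a c / cycleWeight b c ≤ ν) :
    cycleWeight (fun i j => a i j - τ * b i j) c ≤ -((τ - ν) * m * c.length) := by
  have hlen : (1 : ℝ) ≤ c.length := by exact_mod_cast length_pos_iff.2 hc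
  have hmb := length_mul_le_cycleWeight hb c
  have hbpos : 0 < cycleWeight b c := by nlinarith
  rw [cycleWeight_sub_mul]
  rw [div_le_iff₀ hbpos] at hν
  nlinarith

end CycleRatio

lemma pow_le_exp_mul_log {a τ : ℝ} (ha₀ : 0 ≤ a) (ha₁ : a ≤ 1) {d : ℕ} (hd : τ ≤ d) :
    a ^ d ≤ exp (τ * log a) := by
  rcases ha₀.eq_or_lt with rfl | ha
  · cases d <;> simp
  · calc a ^ d = exp (d * log a) := by rw [exp_nat_mul, exp_log ha]
      _ ≤ exp (τ * log a) := exp_le_exp.2 (mul_le_mul_of_nonpos_right hd (log_nonpos ha₀ ha₁))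

lemma tendsto_zero_of_norm_succ_le_exp_mul {E : Type*} [SeminormedAddCommGroup E] {z : ℕ → E}
    {w : ℕ → ℝ} (hz : ∀ k, ‖z (k + 1)‖ ≤ exp (w k) * ‖z k‖)
    (hw : Tendsto (fun n => ∑ k ∈ Finset.range n, w k) atTop atBot) :
    Tendsto z atTop (𝓝 0) := by
  have hbound : ∀ n, ‖z n‖ ≤ ‖z 0‖ * exp (∑ k ∈ Finset.range n, w k) := by
    intro n
    induction n with
    | zero => simp
    | succ n ih =>
      rw [Finset.sum_range_succ, exp_add]
      calc ‖z (n + 1)‖ ≤ exp (w n) * ‖z n‖ := hz n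
        _ ≤ exp (w n) * (‖z 0‖ * exp (∑ k ∈ Finset.range n, w k)) := by gcongr
        _ = _ := by ring
  refine squeeze_zero_norm hbound ?_
  simpa using (tendsto_exp_atBot.comp hw).const_mul ‖z 0‖

lemma tendsto_zero_of_norm_le_on_blocks {E : Type*} [SeminormedAddCommGroup E] {f : ℕ → E}
    {g : ℕ → ℝ} {t : ℕ → ℕ} (ht : StrictMono t)
    (hf : ∀ k u, t k < u → u ≤ t (k + 1) → ‖f u‖ ≤ g k) (hg : Tendsto g atTop (𝓝 0)) :
    Tendsto f atTop (𝓝 0) := by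
  have hblock : ∀ u, t 0 < u → ∃ k, t k < u ∧ u ≤ t (k + 1) := fun u hu =>
    ht.exists_between_of_tendsto_atTop ht.tendsto_atTop hu
  choose! κ hκ using hblock
  have hκ_lim : Tendsto κ atTop atTop := by
    refine tendsto_atTop_atTop.2 fun K => ⟨t K + 1, fun u hu => ?_⟩
    have hKu : t K < u := hu
    have huκ := (hκ u (lt_of_le_of_lt (ht.monotone K.zero_le) hKu)).2
    exact Nat.lt_succ_iff.1 (ht.lt_iff_lt.1 (hKu.trans_le huκ))
  refine squeeze_zero_norm' ?_ (hg.comp hκ_lim)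
  filter_upwards [eventually_gt_atTop (t 0)] with u hu
  exact hf _ u (hκ u hu).1 (hκ u hu).2

section SwitchedSystem

variable {R ι : Type*} [NormedRing R]

lemma norm_mul_pow_mul_le (a b c : R) {n : ℕ} (hn : 0 < n) :
    ‖a * b ^ n * c‖ ≤ ‖a‖ * ‖b‖ ^ n * ‖c‖ :=
  norm_mul₃_le.trans (by gcongr; exact norm_pow_le' b hn)

variable {P : ι → Rˣ} {J : ι → R} {σ s : ℕ → ι} {t : ℕ → ℕ} {Φ : ℕ → R}

lemma eq_mul_pow_mul_of_forall_eq (hΦ : ∀ u, Φ (u + 1) = P (σ u) * J (σ u) * ↑(P (σ u))⁻¹ * Φ u)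
    {a d : ℕ} {i : ι} (hσ : ∀ v < d, σ (a + v) = i) :
    Φ (a + d) = P i * J i ^ d * ↑(P i)⁻¹ * Φ a := by
  rw [← Units.conj_pow]
  induction d with
  | zero => simp
  | succ d ih =>
    rw [← add_assoc, hΦ, hσ d d.lt_succ_self, ih fun v hv => hσ v (by omega), pow_succ']
    simp only [mul_assoc]

lemma eq_mul_pow_mul_of_le_of_le
    (hΦ : ∀ u, Φ (u + 1) = P (σ u) * J (σ u) * ↑(P (σ u))⁻¹ * Φ u)
    (hσ : ∀ k u, t k ≤ u → u < t (k + 1) → σ u = s (k + 1)) {k u : ℕ} (h₁ : t k ≤ u)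
    (h₂ : u ≤ t (k + 1)) :
    Φ u = P (s (k + 1)) * J (s (k + 1)) ^ (u - t k) * (↑(P (s (k + 1)))⁻¹ * Φ (t k)) := by
  rw [← mul_assoc, ← eq_mul_pow_mul_of_forall_eq hΦ fun v hv => hσ k _ (by omega) (by omega),
    Nat.add_sub_cancel' h₁]

theorem tendsto_zero_of_tendsto_sum_log_norm_atBot [Finite ι] (hJ : ∀ i, ‖J i‖ ≤ 1)
    (ht : StrictMono t) {τ : ℝ} (hdwell : ∀ k, τ ≤ ((t (k + 1) - t k : ℕ) : ℝ))
    (hσ : ∀ k u, t k ≤ u → u < t (k + 1) → σ u = s (k + 1))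
    (hΦ : ∀ u, Φ (u + 1) = P (σ u) * J (σ u) * ↑(P (σ u))⁻¹ * Φ u)
    (hsum : Tendsto (fun n => ∑ k ∈ Finset.range n,
      (log ‖↑(P (s (k + 2)))⁻¹ * (P (s (k + 1)) : R)‖ + τ * log ‖J (s (k + 1))‖)) atTop atBot) :
    Tendsto Φ atTop (𝓝 0) := by
  set Z : ℕ → R := fun k => ↑(P (s (k + 1)))⁻¹ * Φ (t k)
  have hd : ∀ k, 0 < t (k + 1) - t k := fun k => Nat.sub_pos_of_lt (ht k.lt_succ_self)
  have hZ : Tendsto Z atTop (𝓝 0) := by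
    refine tendsto_zero_of_norm_succ_le_exp_mul (fun k => ?_) hsum
    have hstep : Z (k + 1) = (↑(P (s (k + 2)))⁻¹ * P (s (k + 1))) *
        J (s (k + 1)) ^ (t (k + 1) - t k) * Z k := by
      simp only [Z, eq_mul_pow_mul_of_le_of_le hΦ hσ (ht k.lt_succ_self).le le_rfl, mul_assoc]
    rw [hstep, exp_add]
    grw [norm_mul_pow_mul_le _ _ _ (hd k), ← le_exp_log ‖_‖,
      pow_le_exp_mul_log (norm_nonneg _) (hJ _) (hdwell k)]
  obtain ⟨K, hK⟩ := (Set.finite_range fun i => ‖(P i : R)‖).bddAbove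
  refine tendsto_zero_of_norm_le_on_blocks ht (g := fun k => K * ‖Z k‖) (fun k u h₁ h₂ => ?_)
    (by simpa using hZ.norm.const_mul K)
  rw [eq_mul_pow_mul_of_le_of_le hΦ hσ h₁.le h₂]
  grw [norm_mul_pow_mul_le _ _ _ (Nat.sub_pos_of_lt h₁), pow_le_one₀ (norm_nonneg _) (hJ _),
    (hK ⟨s (k + 1), rfl⟩ : ‖(P (s (k + 1)) : R)‖ ≤ K), mul_one]

end SwitchedSystem

section StateTransition

variable {R : Type*} [Monoid R]

def stateTransition (B : ℕ → R) : ℕ → R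
  | 0 => 1
  | u + 1 => B u * stateTransition B u

@[simp] lemma stateTransition_zero (B : ℕ → R) : stateTransition B 0 = 1 := rfl

lemma stateTransition_succ (B : ℕ → R) (u : ℕ) :
    stateTransition B (u + 1) = B u * stateTransition B u := rfl

lemma map_stateTransition {S F : Type*} [Monoid S] [FunLike F R S] [MonoidHomClass F R S] (f : F)
    (B : ℕ → R) (u : ℕ) :
    f (stateTransition B u) = stateTransition (fun v => f (B v)) u := by
  induction u with
  | zero => simp
  | succ u ih => rw [stateTransition_succ, stateTransition_succ, map_mul, ih]

lemma eq_stateTransition_mulVec {K n : Type*} [CommRing K] [Fintype n] [DecidableEq n]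
    {B : ℕ → Matrix n n K} {x : ℕ → n → K} (hx : ∀ u, x (u + 1) = B u *ᵥ x u) (u : ℕ) :
    x u = stateTransition B u *ᵥ x 0 := by
  induction u with
  | zero => simp
  | succ u ih => rw [hx, ih, stateTransition_succ, Matrix.mulVec_mulVec]

lemma tendsto_zero_of_tendsto_stateTransition_map_ofReal {n : Type*} [Fintype n] [DecidableEq n]
    {B : ℕ → Matrix n n ℝ} {x : ℕ → n → ℝ} (hx : ∀ u, x (u + 1) = B u *ᵥ x u)
    (hB : Tendsto (stateTransition fun u => (B u).map Complex.ofReal) atTop (𝓝 0)) :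
    Tendsto x atTop (𝓝 0) := by
  have hx_eq : x = fun u =>
      (stateTransition (fun v => (B v).map Complex.ofReal) u).map Complex.re *ᵥ x 0 := by
    funext u
    have hre : ((stateTransition B u).map Complex.ofReal).map Complex.re = stateTransition B u := by
      ext; simp
    rw [eq_stateTransition_mulVec hx u, ← hre]
    exact congr_arg (fun C : Matrix n n ℂ => C.map Complex.re *ᵥ x 0)
      (map_stateTransition Complex.ofRealHom.mapMatrix B u)
  have hcont : Continuous fun C : Matrix n n ℂ => C.map Complex.re *ᵥ x 0 := by fun_prop
  rw [hx_eq]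
  exact (hcont.tendsto' 0 0 (by simp)).comp hB

end StateTransition

theorem min_dwell_time_stability_defective_general
    {N M : ℕ} (A : Fin M → Matrix (Fin N) (Fin N) ℝ)
    (P J : Fin M → Matrix (Fin N) (Fin N) ℂ)
    (hPunit : ∀ i, IsUnit (P i))
    (hdecomp : ∀ i, (A i).map Complex.ofReal = P i * J i * (P i)⁻¹)
    (hJpos : ∀ i, 0 < ‖J i‖) (hJ : ∀ i, ‖J i‖ < 1)
    (E : Fin M → Fin M → Prop)
    (ν τ : ℝ)
    (hν : IsGreatest {r : ℝ | ∃ C, IsCycleList E C ∧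
            r = cycleWeight (fun i j => Real.log ‖(P j)⁻¹ * P i‖) C /
                cycleWeight (fun i _ => -Real.log ‖J i‖) C} ν)
    (hτ : ν < τ)
    (s : ℕ → Fin M) (t : ℕ → ℕ)
    (htmono : StrictMono t)
    (hdwell : ∀ k, τ ≤ ((t (k + 1) - t k : ℕ) : ℝ))
    (hrespect : ∀ k, E (s (k + 1)) (s (k + 2)))
    (σ : ℕ → Fin M)
    (hσ : ∀ k u, t k ≤ u → u < t (k + 1) → σ u = s (k + 1))
    (x : ℕ → Fin N → ℝ)
    (hx : ∀ u, x (u + 1) = (A (σ u)).mulVec (x u)) :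
    Filter.Tendsto x Filter.atTop (nhds 0) := by
  choose U hU using hPunit
  obtain rfl : P = fun i => (U i : Matrix (Fin N) (Fin N) ℂ) := funext fun i => (hU i).symm
  simp only [← Matrix.coe_units_inv] at hdecomp hν
  have : Nonempty (Fin M) := ⟨s 0⟩
  obtain ⟨i₀, hi₀⟩ := Finite.exists_min fun i => -Real.log ‖J i‖
  have hm : 0 < -Real.log ‖J i₀‖ := neg_pos.2 (Real.log_neg (hJpos i₀) (hJ i₀))
  have hsum := tendsto_sum_atBot_of_forall_cycleWeight_le (mul_pos (sub_pos.2 hτ) hm)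
    (fun c hc => cycleWeight_sub_mul_le_of_div_le hm (fun i _ => hi₀ i) hτ.le hc.1
      (hν.2 ⟨c, hc, rfl⟩)) (f := fun k => s (k + 1)) hrespect
  refine tendsto_zero_of_tendsto_stateTransition_map_ofReal hx ?_
  exact tendsto_zero_of_tendsto_sum_log_norm_atBot (P := U) (fun i => (hJ i).le) htmono hdwell hσ
    (fun u => by rw [stateTransition_succ, hdecomp]) (by simpa using hsum)

/-- Graph-based minimum dwell time theorem (defective case).  The subsystem matrices
admit decompositions `Aᵢ = Pᵢ Jᵢ Pᵢ⁻¹` with `‖Jᵢ‖ < 1` (spectral norm); the switching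
graph has weights `ω⁺ᵢⱼ = ln ‖Pⱼ⁻¹Pᵢ‖` and `ω⁻ᵢⱼ = -ln ‖Jᵢ‖ > 0`.  If the dwell time
`τ` exceeds the maximum cycle ratio `ν(𝒢)`, then every solution of the switched system,
with switching signal respecting `𝒢` and all intervals at least `τ`, converges to zero. -/
theorem min_dwell_time_stability_defective
    {N M : ℕ} (A : Fin M → Matrix (Fin N) (Fin N) ℝ)
    (P J : Fin M → Matrix (Fin N) (Fin N) ℂ)
    (hPunit : ∀ i, IsUnit (P i))
    (hdecomp : ∀ i, (A i).map Complex.ofReal = P i * J i * (P i)⁻¹)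
    (hJpos : ∀ i, 0 < ‖J i‖) (hJ : ∀ i, ‖J i‖ < 1)
    (E : Fin M → Fin M → Prop)
    (ν τ : ℝ)
    (hν : IsGreatest {r : ℝ | ∃ C, IsCycleList E C ∧
            r = cycleWeight (fun i j => Real.log ‖(P j)⁻¹ * P i‖) C /
                cycleWeight (fun i _ => -Real.log ‖J i‖) C} ν)
    (hτ : ν < τ)
    (s : ℕ → Fin M) (t : ℕ → ℕ)
    (ht0 : t 0 = 0) (htmono : StrictMono t)
    (hdwell : ∀ k, τ ≤ ((t (k + 1) - t k : ℕ) : ℝ))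
    (hrespect : ∀ k, E (s (k + 1)) (s (k + 2)))
    (σ : ℕ → Fin M)
    (hσ : ∀ k u, t k ≤ u → u < t (k + 1) → σ u = s (k + 1))
    (x : ℕ → Fin N → ℝ)
    (hx : ∀ u, x (u + 1) = (A (σ u)).mulVec (x u)) :
    Filter.Tendsto x Filter.atTop (nhds 0) :=
  min_dwell_time_stability_defective_general A P J hPunit hdecomp hJpos hJ E ν τ hν hτ s t htmono
    hdwell hrespect σ hσ x hx
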